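/- Let G be a finite group of odd order n whose largest prime divisor p satisfies p ≥ 37, and suppose ψ(G) > (271/3647)·ψ(C_n). Then G has a normal cyclic Sylow p-subgroup. -/

import Mathlib

/-- `psi G` is the sum of the orders of all elements of `G`. -/
noncomputable def psi (G : Type*) [Group G] : ℕ := ∑ᶠ g : G, orderOf g

/-- `psiC n` is the sum of the orders of all elements of the cyclic group of order `n`. -/
noncomputable def psiC (n : ℕ) : ℕ := psi (Multiplicative (ZMod n))

/-- A group is supersolvable if it admits a normal series (all terms normal in `G`)
with cyclic factors. -/
def IsSupersolvable (G : Type*) [Group G] : Prop :=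
  ∃ (n : ℕ) (H : Fin (n + 1) → Subgroup G) (hnorm : ∀ i, (H i).Normal),
    H 0 = ⊥ ∧ H (Fin.last n) = ⊤ ∧
    ∀ i : Fin n, H i.castSucc ≤ H i.succ ∧
      letI := (hnorm i.castSucc).subgroupOf (H i.succ)
      IsCyclic (↥(H i.succ) ⧸ (H i.castSucc).subgroupOf (H i.succ))


section AuxiliaryLemmas

open Finset

/-- The sum-of-element-orders of the cyclic group, as an arithmetic function. -/
noncomputable def psiArith : ArithmeticFunction ℕ :=
  ArithmeticFunction.zeta * ⟨fun d => d * d.totient, by simp⟩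

lemma psiArith_apply (n : ℕ) : psiArith n = ∑ d ∈ n.divisors, d * d.totient := by
  rw [psiArith]
  exact ArithmeticFunction.zeta_mul_apply

lemma psiArith_isMultiplicative : psiArith.IsMultiplicative := by
  refine ArithmeticFunction.isMultiplicative_zeta.mul ⟨by simp, ?_⟩
  intro m n hmn
  show m * n * (m * n).totient = m * m.totient * (n * n.totient)
  rw [Nat.totient_mul hmn]; ring


lemma key_pp (q : ℕ) (hq : q.Prime) (k : ℕ) :
    q ^ (2 * k + 1) ≤ (∑ i ∈ Finset.range (k + 1), q ^ i * (q ^ i).totient) * (q + 1) := by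
  obtain ⟨r, rfl⟩ : ∃ r, q = r + 2 := ⟨q - 2, by have := hq.two_le; omega⟩
  induction k with
  | zero => simp
  | succ k ih =>
    rw [Finset.sum_range_succ]
    have ht : ((r + 2) ^ (k + 1)).totient = (r + 2) ^ k * (r + 1) := by
      rw [Nat.totient_prime_pow hq (Nat.succ_pos k)]
      norm_num
    rw [ht]
    have h1 : (r + 2) ^ (2 * (k + 1) + 1) = (r + 2) ^ (2 * k + 1) * ((r + 2) * (r + 2)) := by
      ring
    have h2 : (r + 2) ^ (k + 1) * ((r + 2) ^ k * (r + 1)) = (r + 2) ^ (2 * k + 1) * (r + 1) := by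
      rw [show 2 * k + 1 = (k + 1) + k by omega, pow_add]
      ring
    rw [h1, h2]
    set A := (r + 2) ^ (2 * k + 1) with hA
    set S := ∑ i ∈ Finset.range (k + 1), (r + 2) ^ i * ((r + 2) ^ i).totient with hS
    nlinarith [ih]


lemma psiC_eq_sum (n : ℕ) (hn : n ≠ 0) :
    psiC n = ∑ d ∈ n.divisors, d * d.totient := by
  haveI : NeZero n := ⟨hn⟩
  have hcard : Fintype.card (Multiplicative (ZMod n)) = n := by
    rw [Fintype.card_multiplicative]; exact ZMod.card n
  rw [psiC, psi, finsum_eq_sum_of_fintype]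
  rw [← Finset.sum_fiberwise_of_maps_to (g := fun g : Multiplicative (ZMod n) => orderOf g)
      (t := n.divisors) (fun x _ => Nat.mem_divisors.mpr ⟨by have h' := orderOf_dvd_card (x := x); rwa [hcard] at h', hn⟩)]
  refine Finset.sum_congr rfl fun d hd => ?_
  have hdvd : d ∣ Fintype.card (Multiplicative (ZMod n)) := by
    rw [hcard]; exact (Nat.mem_divisors.mp hd).1
  calc ∑ g ∈ Finset.univ.filter fun g : Multiplicative (ZMod n) => orderOf g = d, orderOf g
      = ∑ g ∈ Finset.univ.filter fun g : Multiplicative (ZMod n) => orderOf g = d, d :=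
        Finset.sum_congr rfl fun g hg => (Finset.mem_filter.mp hg).2
    _ = (Finset.univ.filter fun g : Multiplicative (ZMod n) => orderOf g = d).card * d := by
        rw [Finset.sum_const, smul_eq_mul]
    _ = d * d.totient := by
        rw [IsCyclic.card_orderOf_eq_totient hdvd, mul_comm]

lemma psiC_factor (n : ℕ) (hn : n ≠ 0) :
    psiC n = ∏ q ∈ n.primeFactors,
      ∑ i ∈ Finset.range (n.factorization q + 1), q ^ i * (q ^ i).totient := by
  rw [psiC_eq_sum n hn, ← psiArith_apply,
    psiArith_isMultiplicative.multiplicative_factorization _ hn]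
  rw [Nat.factorization, Finsupp.prod]
  refine Finset.prod_congr rfl fun q hq => ?_
  have hq' : q.Prime := by
    have : q ∈ n.primeFactors := by rwa [← Nat.support_factorization]
    exact Nat.prime_of_mem_primeFactors this
  rw [psiArith_apply, Nat.sum_divisors_prime_pow hq']

lemma psiC_lower (n : ℕ) (hn : n ≠ 0) :
    n ^ 2 * ∏ q ∈ n.primeFactors, q ≤ psiC n * ∏ q ∈ n.primeFactors, (q + 1) := by
  rw [psiC_factor n hn, ← Finset.prod_mul_distrib]
  have hself : ∏ q ∈ n.primeFactors, q ^ n.factorization q = n := by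
    conv_rhs => rw [← Nat.factorization_prod_pow_eq_self hn]
    rfl
  have h2 : n ^ 2 = ∏ q ∈ n.primeFactors, q ^ (2 * n.factorization q) := by
    conv_lhs => rw [← hself]
    rw [← Finset.prod_pow]
    exact Finset.prod_congr rfl fun q _ => by rw [← pow_mul, mul_comm]
  have hLHS : n ^ 2 * ∏ q ∈ n.primeFactors, q
      = ∏ q ∈ n.primeFactors, q ^ (2 * n.factorization q + 1) := by
    rw [h2, ← Finset.prod_mul_distrib]
    exact Finset.prod_congr rfl fun q _ => (pow_succ q _).symm
  rw [hLHS]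
  exact Finset.prod_le_prod' fun q hq =>
    key_pp q (Nat.prime_of_mem_primeFactors hq) _


/-- The set of odd primes less than 37. -/
def S₀ : Finset ℕ := {3, 5, 7, 11, 13, 17, 19, 23, 29, 31}

lemma mem_S₀ : ∀ q < 37, q.Prime → q % 2 = 1 → q ∈ S₀ := by decide

lemma prodS₀ : ∏ q ∈ S₀, q = 100280245065 := by decide

lemma prodS₀' : ∏ q ∈ S₀, (q + 1) = 267544166400 := by decide

lemma subset_prod {S : Finset ℕ} (hS : S ⊆ S₀) :
    100280245065 * ∏ q ∈ S, (q + 1) ≤ 267544166400 * ∏ q ∈ S, q := by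
  rw [← prodS₀, ← prodS₀', ← Finset.prod_sdiff hS, ← Finset.prod_sdiff hS (f := fun q => q + 1)]
  have h1 : ∏ q ∈ S₀ \ S, q ≤ ∏ q ∈ S₀ \ S, (q + 1) :=
    Finset.prod_le_prod' fun i _ => Nat.le_succ i
  calc (∏ q ∈ S₀ \ S, q) * (∏ q ∈ S, q) * ∏ q ∈ S, (q + 1)
      = (∏ q ∈ S₀ \ S, q) * ((∏ q ∈ S, q) * ∏ q ∈ S, (q + 1)) := by ring
    _ ≤ (∏ q ∈ S₀ \ S, (q + 1)) * ((∏ q ∈ S, q) * ∏ q ∈ S, (q + 1)) :=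
        Nat.mul_le_mul_right _ h1
    _ = (∏ q ∈ S₀ \ S, (q + 1)) * (∏ q ∈ S, (q + 1)) * ∏ q ∈ S, q := by ring

lemma primeSet_ineq : ∀ p : ℕ, p.Prime → 37 ≤ p → p % 2 = 1 → ∀ S : Finset ℕ,
    (∀ q ∈ S, q.Prime ∧ q % 2 = 1 ∧ q ≤ p) → p ∈ S →
    3647 * ∏ q ∈ S, (q + 1) ≤ 271 * p * ∏ q ∈ S, q := by
  intro p
  induction p using Nat.strong_induction_on with
  | _ p IH =>
    intro hp hp37 hpodd S hS hpS
    rw [← Finset.mul_prod_erase S _ hpS, ← Finset.mul_prod_erase S _ hpS]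
    set S' := S.erase p with hS'
    set B := ∏ q ∈ S', (q + 1) with hB
    set A := ∏ q ∈ S', q with hA
    by_cases hbig : ∃ q ∈ S', 37 ≤ q
    · obtain ⟨q₀, hq₀S, hq₀37⟩ := hbig
      have hne : S'.Nonempty := ⟨q₀, hq₀S⟩
      set p₂ := S'.max' hne with hp₂
      have hp₂S' : p₂ ∈ S' := S'.max'_mem hne
      have hp₂S := hS p₂ (Finset.mem_of_mem_erase hp₂S')
      have h37 : 37 ≤ p₂ := le_trans hq₀37 (S'.le_max' q₀ hq₀S)
      have hlt : p₂ < p := lt_of_le_of_ne hp₂S.2.2 (Finset.ne_of_mem_erase hp₂S')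
      have hIH : 3647 * B ≤ 271 * p₂ * A := by
        refine IH p₂ hlt hp₂S.1 h37 hp₂S.2.1 S' (fun q hq => ?_) hp₂S'
        have h := hS q (Finset.mem_of_mem_erase hq)
        exact ⟨h.1, h.2.1, S'.le_max' q hq⟩
      have hpp : (p + 1) * p₂ ≤ p * p := by
        have : p₂ + 2 ≤ p := by omega
        nlinarith
      calc 3647 * ((p + 1) * B) = (p + 1) * (3647 * B) := by ring
        _ ≤ (p + 1) * (271 * p₂ * A) := Nat.mul_le_mul_left _ hIH
        _ = 271 * ((p + 1) * p₂) * A := by ring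
        _ ≤ 271 * (p * p) * A := by
            exact Nat.mul_le_mul_right _ (Nat.mul_le_mul_left _ hpp)
        _ = 271 * p * (p * A) := by ring
    · push_neg at hbig
      have hsub : S' ⊆ S₀ := by
        intro q hq
        have h := hS q (Finset.mem_of_mem_erase hq)
        exact mem_S₀ q (hbig q hq) h.1 h.2.1
      have key1 : 100280245065 * B ≤ 267544166400 * A := subset_prod hsub
      have hnum : 3647 * 38 * 267544166400 ≤ 271 * 1369 * 100280245065 := by norm_num
      have hp2 : 1369 * (p + 1) ≤ 38 * (p * p) := by nlinarith
      have c_pos : 0 < 38 * 1369 * 100280245065 := by norm_num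
      refine Nat.le_of_mul_le_mul_left ?_ c_pos
      calc 38 * 1369 * 100280245065 * (3647 * ((p + 1) * B))
          = (1369 * (p + 1)) * ((3647 * 38) * (100280245065 * B)) := by ring
        _ ≤ (38 * (p * p)) * ((3647 * 38) * (267544166400 * A)) :=
            Nat.mul_le_mul hp2 (Nat.mul_le_mul_left _ key1)
        _ = (38 * (p * p) * A) * (3647 * 38 * 267544166400) := by ring
        _ ≤ (38 * (p * p) * A) * (271 * 1369 * 100280245065) :=
            Nat.mul_le_mul_left _ hnum
        _ = 38 * 1369 * 100280245065 * (271 * p * (p * A)) := by ring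


end AuxiliaryLemmas

open Finset in
/-- If $G$ has odd order $n$ whose largest prime divisor $p$ satisfies $p \ge 37$
and $\psi(G) > \frac{271}{3647}\psi(C_n)$, then $G$ has a normal cyclic Sylow
$p$-subgroup. -/
theorem normal_cyclic_sylow_of_odd_of_psi_gt (G : Type*) [Group G] [Finite G]
    (hodd : Odd (Nat.card G))
    (p : ℕ) (hp : p.Prime) (hpn : p ∣ Nat.card G)
    (hmax : ∀ q : ℕ, q.Prime → q ∣ Nat.card G → q ≤ p) (hp37 : 37 ≤ p)
    (h : (271 : ℚ) / 3647 * psiC (Nat.card G) < psi G) :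
    ∃ P : Sylow p G, (P : Subgroup G).Normal ∧ IsCyclic (P : Subgroup G) := by
  by_contra hbad
  push_neg at hbad
  haveI : Fact p.Prime := ⟨hp⟩
  set n := Nat.card G with hn
  have hn0 : n ≠ 0 := Nat.card_pos.ne'
  -- Key bound: in the bad case every element order, multiplied by p, is at most n.
  have key : ∀ g : G, p * orderOf g ≤ n := by
    have hk0 : ∀ g : G, orderOf g ≠ 0 := fun g => (orderOf_pos g).ne'
    have hvle : ∀ (g : G) (q : ℕ), (orderOf g).factorization q ≤ n.factorization q :=
      fun g q => Finsupp.le_def.mp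
        ((Nat.factorization_le_iff_dvd (hk0 g) hn0).mpr (orderOf_dvd_natCard g)) q
    have ha : ∀ g : G, (orderOf g).factorization p < n.factorization p →
        p * orderOf g ≤ n := by
      intro g hv
      have hnp0 : n / p ≠ 0 := (Nat.div_pos (Nat.le_of_dvd Nat.card_pos hpn) hp.pos).ne'
      have hdvd : orderOf g ∣ n / p := by
        rw [← Nat.factorization_le_iff_dvd (hk0 g) hnp0, Nat.factorization_div hpn,
          Finsupp.le_def]
        intro q
        rw [Finsupp.tsub_apply, hp.factorization, Finsupp.single_apply]
        rcases eq_or_ne p q with rfl | hq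
        · rw [if_pos rfl]
          omega
        · rw [if_neg hq]
          have := hvle g q
          omega
      calc p * orderOf g ≤ p * (n / p) :=
            Nat.mul_le_mul_left _ (Nat.le_of_dvd (Nat.pos_of_ne_zero hnp0) hdvd)
        _ = n := Nat.mul_div_cancel' hpn
    have hx : ∀ g : G, (orderOf g).factorization p = n.factorization p →
        ∃ x : G, Commute g x ∧ orderOf x = p ^ n.factorization p := by
      intro g hv
      refine ⟨g ^ (orderOf g / p ^ (orderOf g).factorization p),
        Commute.pow_right (Commute.refl g) _, ?_⟩
      rw [← hv]
      exact orderOf_pow_orderOf_div (hk0 g) (Nat.ordProj_dvd _ p)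
    by_cases hnormal : ∃ P : Sylow p G, (P : Subgroup G).Normal
    · obtain ⟨P, hPn⟩ := hnormal
      have hPnc : ¬IsCyclic (P : Subgroup G) := hbad P hPn
      intro g
      rcases lt_or_eq_of_le (hvle g p) with hv | hv
      · exact ha g hv
      · exfalso
        obtain ⟨x, hcomm, hxord⟩ := hx g hv
        have hxp : IsPGroup p (Subgroup.zpowers x) :=
          IsPGroup.of_card (by rw [Nat.card_zpowers, hxord])
        obtain ⟨Q, hQ⟩ := hxp.exists_le_sylow
        haveI := Sylow.unique_of_normal P hPn
        have hQP : Q = P := Subsingleton.elim Q P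
        have hxP : x ∈ (P : Subgroup G) := by
          rw [← hQP]; exact hQ (Subgroup.mem_zpowers x)
        apply hPnc
        apply isCyclic_of_orderOf_eq_card (⟨x, hxP⟩ : (P : Subgroup G))
        rw [Subgroup.orderOf_mk, hxord, P.card_eq_multiplicity]
    · intro g
      rcases lt_or_eq_of_le (hvle g p) with hv | hv
      · exact ha g hv
      · obtain ⟨x, hcomm, hxord⟩ := hx g hv
        have hxp : IsPGroup p (Subgroup.zpowers x) :=
          IsPGroup.of_card (by rw [Nat.card_zpowers, hxord])
        obtain ⟨Q, hQ⟩ := hxp.exists_le_sylow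
        have hQeq : Subgroup.zpowers x = (Q : Subgroup G) := by
          refine Subgroup.eq_of_le_of_card_ge hQ ?_
          rw [Nat.card_zpowers, hxord, Q.card_eq_multiplicity]
        have hfix : ∀ h ∈ (Q : Subgroup G), g * h * g⁻¹ = h := by
          intro h hh
          rw [← hQeq] at hh
          obtain ⟨k, rfl⟩ := hh
          have hc : Commute g (x ^ k) := hcomm.zpow_right k
          rw [hc.eq, mul_inv_cancel_right]
        have hgN : g ∈ Subgroup.normalizer ((Q : Subgroup G) : Set G) := by
          rw [Subgroup.mem_normalizer_iff]
          intro h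
          constructor
          · intro hh; rw [hfix h hh]; exact hh
          · intro hh
            have e := hfix _ hh
            have e1 := mul_right_cancel e
            have e2 := mul_left_cancel e1
            rw [← e2]; exact hh
        have hordle : orderOf g ≤ Nat.card (Subgroup.normalizer (Q : Set G)) := by
          rw [← Nat.card_zpowers]
          exact Nat.le_of_dvd Nat.card_pos
            (Subgroup.card_dvd_of_le (Subgroup.zpowers_le.mpr hgN))
        have hs1 : Nat.card (Sylow p G) ≠ 1 := by
          intro h1
          refine hnormal ⟨Q, Subgroup.normalizer_eq_top_iff.mp (Subgroup.index_eq_one.mp ?_)⟩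
          rw [← h1]; exact (Sylow.card_eq_index_normalizer Q).symm
        have hmod : Nat.card (Sylow p G) ≡ 1 [MOD p] := card_sylow_modEq_one p G
        have hspos : 0 < Nat.card (Sylow p G) := Nat.card_pos
        have hsp : p + 1 ≤ Nat.card (Sylow p G) := by
          have hdvd : p ∣ Nat.card (Sylow p G) - 1 :=
            (Nat.modEq_iff_dvd' hspos).mp hmod.symm
          obtain ⟨t, ht⟩ := hdvd
          rcases Nat.eq_zero_or_pos t with rfl | htpos
          · omega
          · have hpt : p * 1 ≤ p * t := Nat.mul_le_mul_left p htpos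
            omega
        have hcardmul : Nat.card (Subgroup.normalizer (Q : Set G)) * Nat.card (Sylow p G) = n := by
          rw [Sylow.card_eq_index_normalizer]
          exact Subgroup.card_mul_index _
        calc p * orderOf g ≤ p * Nat.card (Subgroup.normalizer (Q : Set G)) :=
              Nat.mul_le_mul_left _ hordle
          _ ≤ Nat.card (Sylow p G) * Nat.card (Subgroup.normalizer (Q : Set G)) := by
              have : p ≤ Nat.card (Sylow p G) := by omega
              exact Nat.mul_le_mul_right _ this
          _ = n := by rw [mul_comm]; exact hcardmul
  -- from the elementwise bound to the psi bound
  have hpsi : p * psi G ≤ n ^ 2 := by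
    haveI : Fintype G := Fintype.ofFinite G
    rw [psi, finsum_eq_sum_of_fintype, Finset.mul_sum]
    calc ∑ g : G, p * orderOf g ≤ ∑ _g : G, n := Finset.sum_le_sum fun g _ => key g
      _ = Fintype.card G * n := by rw [Finset.sum_const, smul_eq_mul, Finset.card_univ]
      _ = n ^ 2 := by rw [← Nat.card_eq_fintype_card, ← hn, sq]
  -- the arithmetic contradiction
  set S := n.primeFactors with hS
  have hprodpos : 0 < ∏ q ∈ S, q :=
    Finset.prod_pos fun q hq => (Nat.prime_of_mem_primeFactors hq).pos
  have hC2 := psiC_lower n hn0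
  have hpodd : p % 2 = 1 := Nat.odd_iff.mp (hp.odd_of_ne_two (by omega))
  have hC3 : 3647 * ∏ q ∈ S, (q + 1) ≤ 271 * p * ∏ q ∈ S, q := by
    refine primeSet_ineq p hp hp37 hpodd S (fun q hq => ?_)
      (Nat.mem_primeFactors.mpr ⟨hp, hpn, hn0⟩)
    have hq' := Nat.prime_of_mem_primeFactors hq
    have hqd := Nat.dvd_of_mem_primeFactors hq
    refine ⟨hq', ?_, hmax q hq' hqd⟩
    rcases Nat.even_or_odd q with he | ho
    · exfalso
      have h2 : q = 2 := (Nat.Prime.even_iff hq').mp he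
      rw [h2] at hqd
      rw [Nat.odd_iff] at hodd
      omega
    · exact Nat.odd_iff.mp ho
  have hQnat : 271 * psiC n < 3647 * psi G := by
    have h3 : (0 : ℚ) < 3647 := by norm_num
    rw [div_mul_eq_mul_div, div_lt_iff₀ h3] at h
    have : ((271 * psiC n : ℕ) : ℚ) < ((3647 * psi G : ℕ) : ℚ) := by push_cast; linarith
    exact_mod_cast this
  have final : 3647 * psi G * (p * ∏ q ∈ S, q) ≤ 271 * psiC n * (p * ∏ q ∈ S, q) := by
    calc 3647 * psi G * (p * ∏ q ∈ S, q) = 3647 * ((p * psi G) * ∏ q ∈ S, q) := by ring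
      _ ≤ 3647 * (n ^ 2 * ∏ q ∈ S, q) :=
          Nat.mul_le_mul_left _ (Nat.mul_le_mul_right _ hpsi)
      _ ≤ 3647 * (psiC n * ∏ q ∈ S, (q + 1)) := Nat.mul_le_mul_left _ hC2
      _ = psiC n * (3647 * ∏ q ∈ S, (q + 1)) := by ring
      _ ≤ psiC n * (271 * p * ∏ q ∈ S, q) := Nat.mul_le_mul_left _ hC3
      _ = 271 * psiC n * (p * ∏ q ∈ S, q) := by ring
  have hcancel : 3647 * psi G ≤ 271 * psiC n :=
    Nat.le_of_mul_le_mul_right final (by positivity)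
  omega
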